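/- Let (Ω, F, P) be a probability space, let F, F' be square-integrable real random variables, and let γ > 0. Define J(Z) = E[Z] − γ·Var(Z) and, for λ = 1 + 2γ·E[F], define J̃(Z) = E[λZ − γZ²]. If J̃(F') > J̃(F), then J(F') > J(F). Consequently, if F maximizes J over a family of random variables, then F also maximizes J̃ over that family. -/

import Mathlib

open MeasureTheory ProbabilityTheory

/-- If `F` maximizes the mean-variance functional `J`, then it also maximizes the
transformed functional `J̃(Z) = E[λ Z - γ Z²]` with `λ = 1 + 2γ E[F]`. -/
theorem meanVariance_optimal_iff_transformed
    {Ω : Type*} [MeasureSpace Ω] [IsProbabilityMeasure (ℙ : Measure Ω)]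
    (γ : ℝ) (hγ : 0 < γ) (F F' : Ω → ℝ)
    (hF : MemLp F 2 ℙ) (hF' : MemLp F' 2 ℙ)
    (J : (Ω → ℝ) → ℝ) (hJ : ∀ Z, J Z = (∫ ω, Z ω ∂ℙ) - γ * variance Z ℙ)
    (lam : ℝ) (hlam : lam = 1 + 2 * γ * ∫ ω, F ω ∂ℙ)
    (Jt : (Ω → ℝ) → ℝ)
    (hJt : ∀ Z, Jt Z = ∫ ω, (lam * Z ω - γ * (Z ω) ^ 2) ∂ℙ) :
    (Jt F' > Jt F → J F' > J F) ∧
    (∀ S : Set (Ω → ℝ), F ∈ S → (∀ G ∈ S, MemLp G 2 ℙ) →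
      (∀ G ∈ S, J G ≤ J F) → (∀ G ∈ S, Jt G ≤ Jt F)) := by
  have hJtval : ∀ Z : Ω → ℝ, MemLp Z 2 ℙ →
      Jt Z = lam * (∫ ω, Z ω ∂ℙ) - γ * (∫ ω, (Z ω) ^ 2 ∂ℙ) := by
    intro Z hZ
    have h1 : Integrable Z ℙ := hZ.integrable one_le_two
    have h2 : Integrable (fun ω => (Z ω) ^ 2) ℙ := hZ.integrable_sq
    rw [hJt]
    rw [integral_sub (h1.const_mul lam) (h2.const_mul γ), integral_const_mul,
      integral_const_mul]
  have hJval : ∀ Z : Ω → ℝ, MemLp Z 2 ℙ →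
      J Z = (∫ ω, Z ω ∂ℙ) - γ * ((∫ ω, (Z ω) ^ 2 ∂ℙ) - (∫ ω, Z ω ∂ℙ) ^ 2) := by
    intro Z hZ
    rw [hJ, variance_eq_sub hZ]
    congr 1
  have key : ∀ Z : Ω → ℝ, MemLp Z 2 ℙ → Jt Z - Jt F ≤ J Z - J F := by
    intro Z hZ
    rw [hJtval Z hZ, hJtval F hF, hJval Z hZ, hJval F hF, hlam]
    nlinarith [sq_nonneg ((∫ ω, Z ω ∂ℙ) - (∫ ω, F ω ∂ℙ)), hγ.le]
  constructor
  · intro h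
    have := key F' hF'
    linarith
  · intro S hFS hS hmax G hGS
    have := key G (hS G hGS)
    have := hmax G hGS
    linarith
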